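/- Saito's criterion for multiarrangements: let (A,m) be a multiarrangement in K^ℓ with defining polynomial Q(A,m) = Π_{H∈A} α_H^{m(H)}, and let θ_1,...,θ_ℓ ∈ D(A,m). Then det(θ_j(x_i))_{i,j} = f·Q(A,m) for some f ∈ S, and (θ_1,...,θ_ℓ) is a basis of D(A,m) if and only if f is a nonzero constant. Moreover, if the θ_i are homogeneous, they form a basis if and only if they are S-independent and Σ pdeg(θ_i) = |m|. -/

import Mathlib

open scoped Classical
open MvPolynomial

namespace ArrPaper

variable {K : Type*} [Field K] {ℓ : ℕ}

/-- The coordinate ring `S = K[x₁,…,x_ℓ]`. -/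
noncomputable abbrev S (K : Type*) [Field K] (ℓ : ℕ) := MvPolynomial (Fin ℓ) K

/-- The linear form associated to a covector `c`. -/
noncomputable def linForm (c : Fin ℓ → K) : S K ℓ :=
  ∑ i, MvPolynomial.C (c i) * MvPolynomial.X i

/-- The linear functional associated to a covector. -/
noncomputable def toFunc (c : Fin ℓ → K) : (Fin ℓ → K) →ₗ[K] K :=
  ∑ i, c i • LinearMap.proj i

/-- A (central) hyperplane arrangement, given by a finite set of nonzero,
pairwise non-proportional covectors (defining linear forms). -/
structure Arrangement (K : Type*) [Field K] (ℓ : ℕ) where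
  hyps : Finset (Fin ℓ → K)
  ne_zero : ∀ c ∈ hyps, c ≠ 0
  nonparallel : ∀ c ∈ hyps, ∀ c' ∈ hyps, c ≠ c' → ∀ t : K, c' ≠ t • c

/-- Derivations of the polynomial ring `S`. -/
abbrev Der (K : Type*) [Field K] (ℓ : ℕ) := Derivation K (S K ℓ) (S K ℓ)

/-- `θ` is a logarithmic derivation of the multiarrangement `(A, m)`, i.e.
`θ(α_H) ∈ α_H^{m(H)}·S` for all `H ∈ A`. -/
def IsLogDer (A : Arrangement K ℓ) (m : (Fin ℓ → K) → ℕ) (θ : Der K ℓ) : Prop :=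
  ∀ c ∈ A.hyps, (linForm c) ^ (m c) ∣ θ (linForm c)

/-- `θ` is homogeneous of polynomial degree `d`: `θ(α)` is homogeneous of degree `d`
for every linear form `α`. -/
def IsHomogOfDeg (θ : Der K ℓ) (d : ℕ) : Prop :=
  ∀ c : Fin ℓ → K, (θ (linForm c)).IsHomogeneous d

/-- `θ₁, …, θ_ℓ` form a basis of the `S`-module `D(A,m)`. -/
def IsDerBasis (A : Arrangement K ℓ) (m : (Fin ℓ → K) → ℕ) (θ : Fin ℓ → Der K ℓ) : Prop :=
  (∀ i, IsLogDer A m (θ i)) ∧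
  ∀ η : Der K ℓ, IsLogDer A m η → ∃! f : Fin ℓ → S K ℓ, η = ∑ i, f i • θ i

/-- `(A,m)` is free with a homogeneous basis of degrees (exponents) `d`. -/
def IsFreeWithExp (A : Arrangement K ℓ) (m : (Fin ℓ → K) → ℕ) (d : Fin ℓ → ℕ) : Prop :=
  ∃ θ : Fin ℓ → Der K ℓ, (∀ i, IsHomogOfDeg (θ i) (d i)) ∧ IsDerBasis A m θ

/-- `(A,m)` is a free multiarrangement. -/
def IsFree (A : Arrangement K ℓ) (m : (Fin ℓ → K) → ℕ) : Prop :=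
  ∃ d : Fin ℓ → ℕ, IsFreeWithExp A m d

/-- `|m|`, the total multiplicity. -/
def msum (A : Arrangement K ℓ) (m : (Fin ℓ → K) → ℕ) : ℕ := ∑ c ∈ A.hyps, m c

/-- The rank of an arrangement: the dimension of the span of its covectors. -/
noncomputable def rank (A : Arrangement K ℓ) : ℕ :=
  Module.finrank K (Submodule.span K (A.hyps : Set (Fin ℓ → K)))

/-- `A` is reducible: after a linear change of coordinates it is a product of two
arrangements in complementary (nonzero) subspaces.  In terms of covectors: the
covectors split between two complementary nonzero subspaces of the dual space. -/
def Reducible (A : Arrangement K ℓ) : Prop :=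
  ∃ W₁ W₂ : Submodule K (Fin ℓ → K), W₁ ≠ ⊥ ∧ W₂ ≠ ⊥ ∧ W₁ ⊓ W₂ = ⊥ ∧ W₁ ⊔ W₂ = ⊤ ∧
    ∀ c ∈ A.hyps, c ∈ W₁ ∨ c ∈ W₂

/-- The hyperplanes of the localization at a flat; the flat of codimension `r` is
encoded by the `r`-dimensional subspace `U` of the dual space spanned by the
covectors of the hyperplanes containing it. -/
noncomputable def locHyps (A : Arrangement K ℓ) (U : Submodule K (Fin ℓ → K)) :
    Finset (Fin ℓ → K) :=
  A.hyps.filter (· ∈ U)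

/-- `U` encodes a flat of `A` of codimension `r` (an element of `L_r(A)`). -/
def IsFlatOfRank (A : Arrangement K ℓ) (U : Submodule K (Fin ℓ → K)) (r : ℕ) : Prop :=
  Module.finrank K U = r ∧ Submodule.span K (locHyps A U : Set (Fin ℓ → K)) = U

/-- The localization `A_X` of `A` at the flat encoded by `U`. -/
noncomputable def localize (A : Arrangement K ℓ) (U : Submodule K (Fin ℓ → K)) :
    Arrangement K ℓ where
  hyps := locHyps A U
  ne_zero := fun c hc => A.ne_zero c (Finset.mem_filter.mp hc).1
  nonparallel := fun c hc c' hc' =>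
    A.nonparallel c (Finset.mem_filter.mp hc).1 c' (Finset.mem_filter.mp hc').1

/-- `H₀` (given by covector `c₀`) is a heavy hyperplane of `(A,m)`. -/
def IsHeavy (A : Arrangement K ℓ) (m : (Fin ℓ → K) → ℕ) (c₀ : Fin ℓ → K) : Prop :=
  c₀ ∈ A.hyps ∧ (∑ c ∈ A.hyps.erase c₀, m c) ≤ m c₀

/-- `H₀` (given by covector `c₀`) is a locally heavy hyperplane of `(A,m)`. -/
def IsLocallyHeavy (A : Arrangement K ℓ) (m : (Fin ℓ → K) → ℕ) (c₀ : Fin ℓ → K) : Prop :=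
  c₀ ∈ A.hyps ∧ ∀ U : Submodule K (Fin ℓ → K), IsFlatOfRank A U 2 → c₀ ∈ U →
    3 ≤ (locHyps A U).card → (∑ c ∈ (locHyps A U).erase c₀, m c) ≤ m c₀

/-- `b` is the second Betti number of the rank-2 localization of `(A,m)` at `U`:
the product of the nonzero exponents of this free rank-2 multiarrangement. -/
def IsLocalB2 (A : Arrangement K ℓ) (m : (Fin ℓ → K) → ℕ)
    (U : Submodule K (Fin ℓ → K)) (b : ℕ) : Prop :=
  ∃ d : Fin ℓ → ℕ, IsFreeWithExp (localize A U) m d ∧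
    b = ∏ i ∈ Finset.univ.filter (fun i => d i ≠ 0), d i

/-- `b` is the second Betti number `b₂(A,m)` of the multiarrangement `(A,m)`. -/
def IsB2 (A : Arrangement K ℓ) (m : (Fin ℓ → K) → ℕ) (b : ℕ) : Prop :=
  ∃ bloc : Submodule K (Fin ℓ → K) → ℕ,
    (∀ U, IsFlatOfRank A U 2 → IsLocalB2 A m U (bloc U)) ∧
    b = ∑ᶠ U ∈ {U : Submodule K (Fin ℓ → K) | IsFlatOfRank A U 2}, bloc U

/-- The second Betti number of a simple arrangement:
`b₂(A) = Σ_{X ∈ L₂(A)} (|A_X| - 1)`. -/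
noncomputable def b2Simple (A : Arrangement K ℓ) : ℕ :=
  ∑ᶠ U ∈ {U : Submodule K (Fin ℓ → K) | IsFlatOfRank A U 2}, ((locHyps A U).card - 1)

/-- The Euler–Ziegler multiplicity of the restricted hyperplane `H₀ ∩ ker(c)` of
`A^{H₀}`: `m^{H₀}(X) = |m_X| - m(H₀)`. -/
noncomputable def EZmult (A : Arrangement K ℓ) (m : (Fin ℓ → K) → ℕ)
    (c₀ c : Fin ℓ → K) : ℕ :=
  (∑ c' ∈ A.hyps.filter (· ∈ Submodule.span K ({c₀, c} : Set (Fin ℓ → K))), m c') - m c₀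

/-- Two covectors are parallel (define the same hyperplane). -/
def Parallel {n : ℕ} (b b' : Fin n → K) : Prop := ∃ t : K, t ≠ 0 ∧ b' = t • b

/-- The covector on `K^n` obtained by restricting the covector `c` on `K^{n+1}` to the
hyperplane `ker c₀`, transported by the linear isomorphism `e : ker c₀ ≃ K^n`. -/
noncomputable def resCov {n : ℕ} (c₀ : Fin (n+1) → K)
    (e : ↥(LinearMap.ker (toFunc c₀)) ≃ₗ[K] (Fin n → K)) (c : Fin (n+1) → K) :
    Fin n → K :=
  fun j => toFunc c ((e.symm (Pi.single j 1) : ↥(LinearMap.ker (toFunc c₀))) : Fin (n+1) → K)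

/-- `(B, mB)` is (a model, in coordinates, of) the Euler–Ziegler restriction
`(A^{H₀}, m^{H₀})` of `(A,m)` to the hyperplane `H₀ = ker c₀ ∈ A`. -/
def IsEZRes {n : ℕ} (A : Arrangement K (n+1)) (m : (Fin (n+1) → K) → ℕ)
    (c₀ : Fin (n+1) → K) (B : Arrangement K n) (mB : (Fin n → K) → ℕ) : Prop :=
  c₀ ∈ A.hyps ∧
  ∃ e : ↥(LinearMap.ker (toFunc c₀)) ≃ₗ[K] (Fin n → K),
    (∀ c ∈ A.hyps.erase c₀, ∃ b ∈ B.hyps,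
        Parallel b (resCov c₀ e c) ∧ mB b = EZmult A m c₀ c) ∧
    (∀ b ∈ B.hyps, ∃ c ∈ A.hyps.erase c₀, Parallel b (resCov c₀ e c))

/-- A combinatorial equivalence between two arrangements: a bijection between the
hyperplanes inducing an isomorphism of intersection lattices (it preserves the rank
of every subset of hyperplanes). -/
def CombEquiv (A A' : Arrangement K ℓ) : Prop :=
  ∃ φ : (Fin ℓ → K) → (Fin ℓ → K), Set.BijOn φ ↑A.hyps ↑A'.hyps ∧
    ∀ T : Finset (Fin ℓ → K), T ⊆ A.hyps →
      Module.finrank K (Submodule.span K (T : Set (Fin ℓ → K))) =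
      Module.finrank K (Submodule.span K ((T.image φ) : Set (Fin ℓ → K)))

/-! The Saito matrix `M = (θ_j(x_i))` turns `η = ∑ f_j θ_j` into the linear system
`M f = (η(x_i))_i`. Replacing a row of `M` by the combination `∑ c_i · row_i` shows
`α_H^{m(H)} ∣ det M`; distinct `α_H` are coprime primes, so `Q ∣ det M`.

If `det M = t Q` with `t ∈ Kˣ`, Cramer's rule solves `M f = (η(x_i))` over `S` for every
`η ∈ D(A,m)`: each Cramer numerator is the Saito determinant of `θ` with one `θ_j` replaced by
`η`, hence divisible by `Q`. Conversely, if `θ` is a basis then `det M` divides the Saito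
determinant of every family in `D(A,m)`. The families `Q ∂_i`, and `Q ∂_{i₀}` together with
`Q_H' (∂_j - (c_j / c_{i₀}) ∂_{i₀})` (`j ≠ i₀`), where `Q_H' = Q / α_H^{m(H)}` and
`c_{i₀} ≠ 0`, give `det M ∣ Q^ℓ` and `det M ∣ Q Q_H'^{ℓ-1}`. So `det M / Q` divides `Q^ℓ` but
is prime to every `α_H`, hence is a unit.

For homogeneous `θ_i`, `det M` is homogeneous of degree `∑ pdeg θ_i`, and comparing with
`deg Q = |m|` gives the last equivalence. -/

open Matrix

lemma eq_C_of_isHomogeneous_mul {σ R : Type*} [CommRing R] [IsDomain R]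
    {f g : MvPolynomial σ R} {n : ℕ} (hgf : (g * f).IsHomogeneous n) (hg : g.IsHomogeneous n)
    (hgf0 : g * f ≠ 0) : f = C (coeff 0 f) := by
  have hdeg := totalDegree_mul_of_isDomain (left_ne_zero_of_mul hgf0) (right_ne_zero_of_mul hgf0)
  rw [hgf.totalDegree hgf0, hg.totalDegree (left_ne_zero_of_mul hgf0)] at hdeg
  exact totalDegree_eq_zero_iff_eq_C.mp (by omega)

lemma coeff_single_linForm (c : Fin ℓ → K) (i : Fin ℓ) :
    (linForm c).coeff (Finsupp.single i 1) = c i := by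
  simp [linForm, coeff_sum, coeff_C_mul, coeff_X, Finsupp.single_left_inj]

lemma linForm_injective : Function.Injective (linForm : (Fin ℓ → K) → S K ℓ) :=
  fun _ _ h => funext fun i => by
    simpa only [coeff_single_linForm] using congrArg (coeff (Finsupp.single i 1)) h

@[simp]
lemma linForm_zero : linForm (0 : Fin ℓ → K) = 0 := by
  simp [linForm]

lemma linForm_smul (t : K) (c : Fin ℓ → K) : linForm (t • c) = C t * linForm c := by
  simp [linForm, Finset.mul_sum, mul_assoc]

lemma linForm_ne_zero {c : Fin ℓ → K} (hc : c ≠ 0) : linForm c ≠ 0 :=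
  linForm_zero (K := K) ▸ linForm_injective.ne hc

lemma isHomogeneous_linForm (c : Fin ℓ → K) : (linForm c).IsHomogeneous 1 :=
  IsHomogeneous.sum _ _ _ fun _ _ => isHomogeneous_C_mul_X _ _

lemma totalDegree_linForm {c : Fin ℓ → K} (hc : c ≠ 0) : (linForm c).totalDegree = 1 :=
  (isHomogeneous_linForm c).totalDegree (linForm_ne_zero hc)

lemma irreducible_linForm {c : Fin ℓ → K} (hc : c ≠ 0) : Irreducible (linForm c) := by
  obtain ⟨i, hi⟩ := Function.ne_iff.mp hc
  refine irreducible_of_totalDegree_eq_one (totalDegree_linForm hc) fun x hx => ?_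
  refine isUnit_iff_ne_zero.mpr fun hx0 => hi ?_
  simpa [hx0, coeff_single_linForm] using hx (Finsupp.single i 1)

lemma exists_eq_smul_of_linForm_dvd {c c' : Fin ℓ → K} (hc' : c' ≠ 0)
    (h : linForm c ∣ linForm c') : ∃ t : K, c' = t • c := by
  obtain ⟨u, hu⟩ := h
  have hc : c ≠ 0 := by
    rintro rfl
    exact linForm_ne_zero hc' (by simpa using hu)
  have hu0 : u ≠ 0 := by
    rintro rfl
    exact linForm_ne_zero hc' (by simpa using hu)
  have hu_deg : u.totalDegree = 0 := by
    have := congrArg totalDegree hu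
    rw [totalDegree_mul_of_isDomain (linForm_ne_zero hc) hu0, totalDegree_linForm hc,
      totalDegree_linForm hc'] at this
    omega
  refine ⟨coeff 0 u, linForm_injective ?_⟩
  rw [linForm_smul, hu, ← totalDegree_eq_zero_iff_eq_C.mp hu_deg, mul_comm]

lemma linForm_single (i : Fin ℓ) : linForm (Pi.single i (1 : K)) = X i := by
  simp [linForm, Pi.single_apply]

lemma derivation_linForm (θ : Der K ℓ) (c : Fin ℓ → K) :
    θ (linForm c) = (fun i => C (c i)) ⬝ᵥ fun i => θ (X i) := by
  simp [linForm, dotProduct, ← smul_eq_C_mul]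

lemma Arrangement.isRelPrime_linForm (A : Arrangement K ℓ) {c c' : Fin ℓ → K}
    (hc : c ∈ A.hyps) (hc' : c' ∈ A.hyps) (hne : c ≠ c') :
    IsRelPrime (linForm c) (linForm c') := by
  refine (irreducible_linForm (A.ne_zero c hc)).isRelPrime_iff_not_dvd.mpr fun h => ?_
  obtain ⟨t, ht⟩ := exists_eq_smul_of_linForm_dvd (A.ne_zero c' hc') h
  exact A.nonparallel c hc c' hc' hne t ht

section DefiningPolynomial

variable (A : Arrangement K ℓ) (m : (Fin ℓ → K) → ℕ)

noncomputable def definingPoly : S K ℓ := ∏ c ∈ A.hyps, linForm c ^ m c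

lemma definingPoly_ne_zero : definingPoly A m ≠ 0 :=
  Finset.prod_ne_zero_iff.mpr fun c hc => pow_ne_zero _ (linForm_ne_zero (A.ne_zero c hc))

lemma isHomogeneous_definingPoly : (definingPoly A m).IsHomogeneous (msum A m) :=
  IsHomogeneous.prod _ _ _ fun c _ => by simpa using (isHomogeneous_linForm c).pow (m c)

variable {A m}

lemma pow_dvd_definingPoly {c : Fin ℓ → K} (hc : c ∈ A.hyps) :
    linForm c ^ m c ∣ definingPoly A m :=
  Finset.dvd_prod_of_mem _ hc

lemma definingPoly_eq_mul_prod_erase {c : Fin ℓ → K} (hc : c ∈ A.hyps) :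
    definingPoly A m = linForm c ^ m c * ∏ c' ∈ A.hyps.erase c, linForm c' ^ m c' :=
  (Finset.mul_prod_erase _ _ hc).symm

lemma definingPoly_dvd {p : S K ℓ} (h : ∀ c ∈ A.hyps, linForm c ^ m c ∣ p) :
    definingPoly A m ∣ p :=
  Finset.prod_dvd_of_isRelPrime (fun _ hc _ hc' hne => (A.isRelPrime_linForm hc hc' hne).pow) h

lemma isRelPrime_linForm_prod_erase {c : Fin ℓ → K} (hc : c ∈ A.hyps) :
    IsRelPrime (linForm c) (∏ c' ∈ A.hyps.erase c, linForm c' ^ m c') :=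
  IsRelPrime.prod_right fun _ hc' => (A.isRelPrime_linForm hc (Finset.mem_of_mem_erase hc')
    (Finset.ne_of_mem_erase hc').symm).pow_right

lemma isRelPrime_definingPoly {f : S K ℓ} (h : ∀ c ∈ A.hyps, ¬ linForm c ∣ f) :
    IsRelPrime (definingPoly A m) f :=
  IsRelPrime.prod_left fun c hc =>
    ((irreducible_linForm (A.ne_zero c hc)).isRelPrime_iff_not_dvd.mpr (h c hc)).pow_left

end DefiningPolynomial

noncomputable def saitoMatrix (θ : Fin ℓ → Der K ℓ) : Matrix (Fin ℓ) (Fin ℓ) (S K ℓ) :=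
  Matrix.of fun i j => θ j (X i)

lemma saitoMatrix_mulVec (θ : Fin ℓ → Der K ℓ) (f : Fin ℓ → S K ℓ) :
    saitoMatrix θ *ᵥ f = fun i => (∑ j, f j • θ j) (X i) := by
  ext i
  rw [← Derivation.coeFnAddMonoidHom_apply, map_sum, Finset.sum_apply]
  simp [saitoMatrix, mulVec, dotProduct, mul_comm]

lemma eq_sum_smul_iff_saitoMatrix_mulVec {η : Der K ℓ} {θ : Fin ℓ → Der K ℓ}
    {f : Fin ℓ → S K ℓ} :
    η = ∑ j, f j • θ j ↔ saitoMatrix θ *ᵥ f = fun i => η (X i) := by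
  rw [saitoMatrix_mulVec]
  refine ⟨fun h => h ▸ rfl, fun h => derivation_ext fun i => (congrFun h i).symm⟩

lemma saitoMatrix_update (θ : Fin ℓ → Der K ℓ) (j : Fin ℓ) (η : Der K ℓ) :
    saitoMatrix (Function.update θ j η) = (saitoMatrix θ).updateCol j fun i => η (X i) := by
  ext i k
  by_cases hk : k = j
  · subst hk; simp [saitoMatrix]
  · simp [saitoMatrix, hk]

lemma linearIndependent_iff_det_saitoMatrix_ne_zero (θ : Fin ℓ → Der K ℓ) :
    LinearIndependent (S K ℓ) θ ↔ (saitoMatrix θ).det ≠ 0 := by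
  have h0 : ∀ f : Fin ℓ → S K ℓ, ∑ j, f j • θ j = 0 ↔ saitoMatrix θ *ᵥ f = 0 := fun f => by
    rw [eq_comm, eq_sum_smul_iff_saitoMatrix_mulVec]
    rfl
  rw [Fintype.linearIndependent_iff, Ne, ← exists_mulVec_eq_zero_iff]
  simp only [h0]
  constructor
  · rintro h ⟨v, hv, hMv⟩
    exact hv (funext (h v hMv))
  · intro h g hg
    by_contra hne
    exact h ⟨g, fun hg0 => hne (congrFun hg0), hg⟩

lemma isHomogeneous_det_saitoMatrix {θ : Fin ℓ → Der K ℓ} {d : Fin ℓ → ℕ}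
    (hd : ∀ i, IsHomogOfDeg (θ i) (d i)) : (saitoMatrix θ).det.IsHomogeneous (∑ i, d i) := by
  have hentry : ∀ i j, (saitoMatrix θ i j).IsHomogeneous (d j) := fun i j => by
    simpa [saitoMatrix, linForm_single] using hd j (Pi.single i 1)
  rw [det_apply']
  refine IsHomogeneous.sum _ _ _ fun σ _ => ?_
  simpa using ((isHomogeneous_C _ ((σ.sign : ℤ) : K)).mul
    (IsHomogeneous.prod _ _ _ fun i _ => hentry (σ i) i))

section SaitoCriterion

variable {A : Arrangement K ℓ} {m : (Fin ℓ → K) → ℕ} {θ : Fin ℓ → Der K ℓ}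

lemma linForm_pow_dvd_det_saitoMatrix {c : Fin ℓ → K} (hc : c ≠ 0) {n : ℕ}
    (h : ∀ j, linForm c ^ n ∣ θ j (linForm c)) : linForm c ^ n ∣ (saitoMatrix θ).det := by
  obtain ⟨i₀, hi₀⟩ := Function.ne_iff.mp hc
  choose w hw using h
  -- Replacing row `i₀` by `∑ c_i • row_i = (θ_j(α))_j` multiplies `det` by the unit `c_{i₀}`.
  have hrow : ∑ i, (C (c i) : S K ℓ) • saitoMatrix θ i = linForm c ^ n • w := by
    ext j
    simp [← hw, derivation_linForm, saitoMatrix, dotProduct, Finset.sum_apply]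
  have hdet := det_updateRow_sum (saitoMatrix θ) i₀ fun i => (C (c i) : S K ℓ)
  rw [hrow, det_updateRow_smul, smul_eq_mul] at hdet
  exact ((isUnit_iff_ne_zero.mpr hi₀).map C).dvd_mul_left.mp (Dvd.intro _ hdet)

lemma definingPoly_dvd_det_saitoMatrix (hθ : ∀ j, IsLogDer A m (θ j)) :
    definingPoly A m ∣ (saitoMatrix θ).det :=
  definingPoly_dvd fun c hc =>
    linForm_pow_dvd_det_saitoMatrix (A.ne_zero c hc) fun j => hθ j c hc

lemma isDerBasis_of_det_saitoMatrix_eq (hθ : ∀ j, IsLogDer A m (θ j)) {t : K} (ht : t ≠ 0)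
    (hdet : (saitoMatrix θ).det = C t * definingPoly A m) : IsDerBasis A m θ := by
  set M := saitoMatrix θ
  have hQ := definingPoly_ne_zero A m
  have hdet0 : M.det ≠ 0 := hdet ▸ mul_ne_zero (C_ne_zero.mpr ht) hQ
  refine ⟨hθ, fun η hη => ?_⟩
  simp only [eq_sum_smul_iff_saitoMatrix_mulVec]
  set v : Fin ℓ → S K ℓ := fun i => η (X i)
  have hcramer : ∀ j, definingPoly A m ∣ cramer M v j := fun j => by
    rw [cramer_apply, ← saitoMatrix_update]
    refine definingPoly_dvd_det_saitoMatrix fun i => ?_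
    rcases eq_or_ne i j with rfl | hij
    · simpa using hη
    · simpa [hij] using hθ i
  choose h hh using hcramer
  have hMh : M *ᵥ h = (C t : S K ℓ) • v := by
    refine smul_right_injective _ hQ ?_
    dsimp only
    rw [← mulVec_smul, smul_smul, mul_comm, ← hdet, ← mulVec_cramer]
    exact congrArg _ (funext hh).symm
  have hsol : M *ᵥ ((C t⁻¹ : S K ℓ) • h) = v := by
    rw [mulVec_smul, hMh, smul_smul, ← C_mul, inv_mul_cancel₀ ht, C_1, one_smul]
  exact ⟨_, hsol, fun f hf => mulVec_injective_of_det_ne_zero hdet0 (hf.trans hsol.symm)⟩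

lemma det_saitoMatrix_dvd_det_of_isDerBasis (hB : IsDerBasis A m θ)
    (N : Matrix (Fin ℓ) (Fin ℓ) (S K ℓ))
    (hN : ∀ c ∈ A.hyps, ∀ j, linForm c ^ m c ∣ ((fun i => C (c i)) ᵥ* N) j) :
    (saitoMatrix θ).det ∣ N.det := by
  have hlog : ∀ j, IsLogDer A m (mkDerivation K fun i => N i j) := fun j c hc => by
    simpa [derivation_linForm, mkDerivation_X, vecMul] using hN c hc j
  choose g hg _ using fun j => hB.2 _ (hlog j)
  have hfactor : N = saitoMatrix θ * (of g)ᵀ := by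
    refine Matrix.ext fun i j => ?_
    have := congrFun (eq_sum_smul_iff_saitoMatrix_mulVec.mp (hg j)) i
    simpa [mkDerivation_X, mul_apply, mulVec, dotProduct] using this.symm
  rw [hfactor, det_mul]
  exact dvd_mul_right _ _

lemma det_saitoMatrix_dvd_definingPoly_pow (hB : IsDerBasis A m θ) :
    (saitoMatrix θ).det ∣ definingPoly A m ^ ℓ := by
  simpa using det_saitoMatrix_dvd_det_of_isDerBasis hB (diagonal fun _ => definingPoly A m)
    fun c hc j => by simpa [vecMul_diagonal] using (pow_dvd_definingPoly hc).mul_left (C (c j))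

lemma det_saitoMatrix_dvd_definingPoly_mul_prod_erase_pow (hB : IsDerBasis A m θ)
    {c : Fin ℓ → K} (hc : c ∈ A.hyps) :
    (saitoMatrix θ).det ∣
      definingPoly A m * (∏ c' ∈ A.hyps.erase c, linForm c' ^ m c') ^ (ℓ - 1) := by
  obtain ⟨i₀, hi₀⟩ : ∃ i, c i ≠ 0 := Function.ne_iff.mp (A.ne_zero c hc)
  set Q' := ∏ c' ∈ A.hyps.erase c, linForm c' ^ m c'
  -- The columns `j ≠ i₀` of `P` are the constant derivations `∂_j - (c_j / c_{i₀}) ∂_{i₀}`,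
  -- which kill `α_c`; so `P · diag(Q', …, Q, …, Q')` has logarithmic columns.
  set P : Matrix (Fin ℓ) (Fin ℓ) K :=
    1 + vecMulVec (Pi.single i₀ 1) (Pi.single i₀ 1 - (c i₀)⁻¹ • c) with hP
  have hdetP : P.det = 1 := by
    rw [hP, vecMulVec_eq Unit, det_one_add_replicateCol_mul_replicateRow]
    simp [hi₀]
  have hcP : c ᵥ* P = Pi.single i₀ (c i₀) := by
    ext j
    simp only [hP, vecMul_add, vecMul_one, vecMul_vecMulVec, dotProduct_single, mul_one,
      Pi.add_apply, Pi.smul_apply, Pi.sub_apply, Pi.single_apply, smul_eq_mul]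
    split_ifs <;> field_simp <;> ring
  set s : Fin ℓ → S K ℓ := Function.update (fun _ => Q') i₀ (definingPoly A m)
  have hdetN : (P.map C * diagonal s).det = definingPoly A m * Q' ^ (ℓ - 1) := by
    rw [det_mul, ← RingHom.mapMatrix_apply, ← RingHom.map_det, hdetP, map_one, one_mul,
      det_diagonal, Finset.prod_update_of_mem (Finset.mem_univ _)]
    simp [← Finset.compl_eq_univ_sdiff, Finset.card_compl]
  rw [← hdetN]
  refine det_saitoMatrix_dvd_det_of_isDerBasis hB _ fun c' hc' j => ?_
  have hC : ((fun i => (C (c' i) : S K ℓ)) ᵥ* P.map C) j = C ((c' ᵥ* P) j) :=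
    (RingHom.map_vecMul C P c' j).symm
  rw [← vecMul_vecMul, vecMul_diagonal, hC]
  rcases eq_or_ne c' c with rfl | hne
  · rcases eq_or_ne j i₀ with rfl | hj
    · simpa [s] using (pow_dvd_definingPoly hc').mul_left _
    · simp [hcP, hj]
  · have hQ' : linForm c' ^ m c' ∣ Q' :=
      Finset.dvd_prod_of_mem _ (Finset.mem_erase.mpr ⟨hne, hc'⟩)
    have hs : Q' ∣ s j := by
      rcases eq_or_ne j i₀ with rfl | hj
      · simp [s, definingPoly_eq_mul_prod_erase hc, Q']
      · simp [s, hj]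
    exact (hQ'.trans hs).mul_left _

lemma isUnit_of_isDerBasis (hB : IsDerBasis A m θ) {f : S K ℓ}
    (hf : (saitoMatrix θ).det = definingPoly A m * f) : IsUnit f := by
  have hQ := definingPoly_ne_zero A m
  have hf_dvd : f ∣ definingPoly A m ^ ℓ :=
    (Dvd.intro_left _ hf.symm).trans (det_saitoMatrix_dvd_definingPoly_pow hB)
  have hnd : ∀ c ∈ A.hyps, ¬ linForm c ∣ f := fun c hc hcf => by
    have : f ∣ (∏ c' ∈ A.hyps.erase c, linForm c' ^ m c') ^ (ℓ - 1) :=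
      (mul_dvd_mul_iff_left hQ).mp (hf ▸ det_saitoMatrix_dvd_definingPoly_mul_prod_erase_pow hB hc)
    exact (irreducible_linForm (A.ne_zero c hc)).not_isUnit
      ((isRelPrime_linForm_prod_erase hc).pow_right dvd_rfl (hcf.trans this))
  exact (isRelPrime_definingPoly hnd).pow_left hf_dvd dvd_rfl

lemma isDerBasis_iff_det_saitoMatrix_eq (hθ : ∀ j, IsLogDer A m (θ j)) :
    IsDerBasis A m θ ↔ ∃ t : K, t ≠ 0 ∧ (saitoMatrix θ).det = C t * definingPoly A m := by
  refine ⟨fun hB => ?_, fun ⟨t, ht, hdet⟩ => isDerBasis_of_det_saitoMatrix_eq hθ ht hdet⟩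
  obtain ⟨f, hf⟩ := definingPoly_dvd_det_saitoMatrix hθ
  obtain ⟨t, ht, rfl⟩ := isUnit_iff_eq_C_of_isReduced.mp (isUnit_of_isDerBasis hB hf)
  exact ⟨t, ht.ne_zero, hf.trans (mul_comm _ _)⟩

lemma isDerBasis_iff_linearIndependent_and_sum_eq (hθ : ∀ j, IsLogDer A m (θ j))
    {d : Fin ℓ → ℕ} (hd : ∀ i, IsHomogOfDeg (θ i) (d i)) :
    IsDerBasis A m θ ↔ LinearIndependent (S K ℓ) θ ∧ ∑ i, d i = msum A m := by
  rw [isDerBasis_iff_det_saitoMatrix_eq hθ, linearIndependent_iff_det_saitoMatrix_ne_zero]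
  have hdeg := isHomogeneous_det_saitoMatrix hd
  have hQ := isHomogeneous_definingPoly A m
  constructor
  · rintro ⟨t, ht, hdet⟩
    have hdet0 : (saitoMatrix θ).det ≠ 0 :=
      hdet ▸ mul_ne_zero (C_ne_zero.mpr ht) (definingPoly_ne_zero A m)
    exact ⟨hdet0, hdeg.inj_right (hdet ▸ hQ.C_mul t) hdet0⟩
  · rintro ⟨hdet0, hsum⟩
    obtain ⟨f, hf⟩ := definingPoly_dvd_det_saitoMatrix hθ
    rw [hf] at hdet0 hdeg
    have hfC := eq_C_of_isHomogeneous_mul (hsum ▸ hdeg) hQ hdet0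
    refine ⟨coeff 0 f, fun h0 => ?_, by rw [hf, mul_comm, ← hfC]⟩
    exact right_ne_zero_of_mul hdet0 (by rw [hfC, h0, C_0])

end SaitoCriterion

theorem stmt6_general (A : Arrangement K ℓ) (m : (Fin ℓ → K) → ℕ)
    (θ : Fin ℓ → Der K ℓ)
    (hθ : ∀ i, IsLogDer A m (θ i)) :
    (∃ f : S K ℓ, (Matrix.of fun i j => θ j (MvPolynomial.X i)).det
        = f * ∏ c ∈ A.hyps, linForm c ^ (m c)) ∧
    (IsDerBasis A m θ ↔ ∃ t : K, t ≠ 0 ∧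
        (Matrix.of fun i j => θ j (MvPolynomial.X i)).det
          = MvPolynomial.C t * ∏ c ∈ A.hyps, linForm c ^ (m c)) ∧
    (∀ d : Fin ℓ → ℕ, (∀ i, IsHomogOfDeg (θ i) (d i)) →
      (IsDerBasis A m θ ↔ (LinearIndependent (S K ℓ) θ ∧ ∑ i, d i = msum A m))) := by
  obtain ⟨f, hf⟩ := definingPoly_dvd_det_saitoMatrix hθ
  exact ⟨⟨f, hf.trans (mul_comm _ _)⟩, isDerBasis_iff_det_saitoMatrix_eq hθ,
    fun d hd => isDerBasis_iff_linearIndependent_and_sum_eq hθ hd⟩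

theorem stmt6 (A : Arrangement K ℓ) (m : (Fin ℓ → K) → ℕ)
    (hm : ∀ c ∈ A.hyps, 0 < m c) (θ : Fin ℓ → Der K ℓ)
    (hθ : ∀ i, IsLogDer A m (θ i)) :
    (∃ f : S K ℓ, (Matrix.of fun i j => θ j (MvPolynomial.X i)).det
        = f * ∏ c ∈ A.hyps, linForm c ^ (m c)) ∧
    (IsDerBasis A m θ ↔ ∃ t : K, t ≠ 0 ∧
        (Matrix.of fun i j => θ j (MvPolynomial.X i)).det
          = MvPolynomial.C t * ∏ c ∈ A.hyps, linForm c ^ (m c)) ∧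
    (∀ d : Fin ℓ → ℕ, (∀ i, IsHomogOfDeg (θ i) (d i)) →
      (IsDerBasis A m θ ↔ (LinearIndependent (S K ℓ) θ ∧ ∑ i, d i = msum A m))) :=
  stmt6_general A m θ hθ

end ArrPaper
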